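/- Given k+1 NFA A_0, ..., A_k over Σ, define a k-tape automaton C from A_k whose states are Q_k ∪ (Q_k × Σ × {1,...,k−1}), initial state s_k, final states F_k, and transitions: q →^{(σ,0)} (q,σ,1) for all q, σ; (q,σ,i) →^{(σ,i)} (q,σ,i+1) for 1 ≤ i ≤ k−2; and (q,σ,k−1) →^{(σ,k−1)} q' whenever (q,σ,q') ∈ Δ_k. Then there exist words w_i ∈ L(A_i) for i ∈ [k] with (w_0,...,w_{k−1}) ∈ L(C) if and only if ⋂_{i=0}^{k} L(A_i) ≠ ∅. -/

import Mathlib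

/-- A (one-way) `k`-tape automaton: transitions read a letter from one of the
`k` tapes. -/
structure MTA (α : Type*) (k : ℕ) (Q : Type*) where
  step : Q → α × Fin k → Set Q
  start : Set Q
  accept : Set Q

/-- `M.Reach q w q'`: from state `q` with remaining tape contents `w`, the
automaton can consume all tapes and end in state `q'`. -/
inductive MTA.Reach {α : Type*} {k : ℕ} {Q : Type*} (M : MTA α k Q) :
    Q → (Fin k → List α) → Q → Prop
  | refl (q : Q) : MTA.Reach M q (fun _ => []) q
  | step {q q' q'' : Q} {σ : α} {i : Fin k} {w : Fin k → List α} :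
      q' ∈ M.step q (σ, i) → MTA.Reach M q' w q'' →
      MTA.Reach M q (Function.update w i (σ :: w i)) q''

/-- The `k`-tuple `w` of tape contents is accepted by the `k`-tape automaton
`M`: some run from an initial state fully reads all tapes and ends in a final
state. -/
def MTA.Accepts {α : Type*} {k : ℕ} {Q : Type*} (M : MTA α k Q)
    (w : Fin k → List α) : Prop :=
  ∃ q ∈ M.start, ∃ f ∈ M.accept, M.Reach q w f

/-- The `k`-tape automaton `C` built from the NFA `Ak`: states
`Q_k ∪ (Q_k × Σ × {1,…,k-1})`, initial/final states those of `Ak`, and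
transitions `q →^{(σ,0)} (q,σ,1)`; `(q,σ,i) →^{(σ,i)} (q,σ,i+1)` for
`1 ≤ i ≤ k-2`; and `(q,σ,k-1) →^{(σ,k-1)} q'` whenever `(q,σ,q') ∈ Δ_k`.
(The tag `j : Fin (k-1)` encodes the label `i = j+1`.) -/
def tapeAut {α Qk : Type*} (k : ℕ) (hk : 2 ≤ k) (Ak : NFA α Qk) :
    MTA α k (Qk ⊕ Qk × α × Fin (k - 1)) where
  step := fun x τ =>
    match x with
    | Sum.inl q =>
        {y | τ.2 = (⟨0, by omega⟩ : Fin k) ∧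
             y = Sum.inr (q, τ.1, (⟨0, by omega⟩ : Fin (k - 1)))}
    | Sum.inr (q, σ, j) =>
        {y | τ.1 = σ ∧ (τ.2 : Fin k).val = j.val + 1 ∧
             ((∃ h : j.val + 1 < k - 1, y = Sum.inr (q, σ, ⟨j.val + 1, h⟩)) ∨
              (j.val + 1 = k - 1 ∧ ∃ q', q' ∈ Ak.step q σ ∧ y = Sum.inl q'))}
  start := Sum.inl '' Ak.start
  accept := Sum.inl '' Ak.accept

/-!
From a state `q` of `A_k`, a run of `tapeAut` reads one letter `σ` from tape 0, then the same
`σ` from tapes `1, …, k-1`, and only then takes an `A_k`-transition on `σ`. Hence from `q` it can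
consume the tapes `w` and stop in `f` exactly when `w` is a constant tuple `(u, …, u)` and `u`
labels an `A_k`-path from `q` to `f`, so `tapeAut` accepts precisely the diagonal of `L(A_k)`.
-/

section

variable {α : Type*} {k : ℕ}

def staggeredTapes (σ : α) (u : List α) (n : ℕ) : Fin k → List α :=
  fun i => if i.val < n then u else σ :: u

theorem staggeredTapes_zero (σ : α) (u : List α) :
    staggeredTapes (k := k) σ u 0 = fun _ => σ :: u :=
  funext fun _ => if_neg (Nat.not_lt_zero _)

theorem staggeredTapes_of_le (σ : α) (u : List α) {n : ℕ} (hn : k ≤ n) :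
    staggeredTapes (k := k) σ u n = fun _ => u :=
  funext fun i => if_pos (by omega)

theorem update_staggeredTapes (σ : α) (u : List α) (i : Fin k) :
    Function.update (staggeredTapes σ u (i + 1)) i (σ :: staggeredTapes σ u (i + 1) i) =
      staggeredTapes σ u i := by
  funext i'
  rcases eq_or_ne i' i with rfl | h
  · simp [staggeredTapes]
  · have : i'.val ≠ i.val := Fin.val_ne_of_ne h
    simp only [Function.update_of_ne h, staggeredTapes]
    split_ifs <;> first | rfl | omega

theorem MTA.Reach.step_staggeredTapes {Q : Type*} {M : MTA α k Q} {x y z : Q} {σ : α}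
    {u : List α} {i : Fin k} (hxy : y ∈ M.step x (σ, i))
    (h : M.Reach y (staggeredTapes σ u (i + 1)) z) : M.Reach x (staggeredTapes σ u i) z := by
  simpa only [update_staggeredTapes] using MTA.Reach.step hxy h

section tapeAut

variable {Qk : Type*} (hk : 2 ≤ k) (Ak : NFA α Qk)

theorem tapeAut_step_inl (q : Qk) (σ : α) :
    .inr (q, σ, ⟨0, by omega⟩) ∈ (tapeAut k hk Ak).step (.inl q) (σ, ⟨0, by omega⟩) :=
  ⟨rfl, rfl⟩

theorem tapeAut_step_inr_succ (q : Qk) (σ : α) (j : ℕ) (hj : j + 1 < k - 1) :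
    .inr (q, σ, ⟨j + 1, hj⟩) ∈
      (tapeAut k hk Ak).step (.inr (q, σ, ⟨j, by omega⟩)) (σ, ⟨j + 1, by omega⟩) :=
  ⟨rfl, rfl, .inl ⟨hj, rfl⟩⟩

theorem tapeAut_step_inr_last {q q' : Qk} {σ : α} (hq' : q' ∈ Ak.step q σ) :
    .inl q' ∈ (tapeAut k hk Ak).step (.inr (q, σ, ⟨k - 2, by omega⟩)) (σ, ⟨k - 1, by omega⟩) :=
  ⟨rfl, by simp only; omega, .inr ⟨by simp only; omega, q', hq', rfl⟩⟩

theorem tapeAut_reach_inr_of_reach {q q' : Qk} {σ : α} {u : List α}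
    {z : Qk ⊕ Qk × α × Fin (k - 1)} (hq' : q' ∈ Ak.step q σ)
    (h : (tapeAut k hk Ak).Reach (.inl q') (fun _ => u) z) (j : ℕ) (hj : j < k - 1) :
    (tapeAut k hk Ak).Reach (.inr (q, σ, ⟨j, hj⟩)) (staggeredTapes σ u (j + 1)) z := by
  have hjk : j ≤ k - 2 := by omega
  revert hj
  induction hjk using Nat.decreasingInduction with
  | self =>
    intro _
    rw [show k - 2 + 1 = k - 1 by omega]
    refine MTA.Reach.step_staggeredTapes (tapeAut_step_inr_last hk Ak hq') ?_
    rwa [staggeredTapes_of_le σ u (by simp only; omega)]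
  | of_succ j hjk ih =>
    intro _
    exact MTA.Reach.step_staggeredTapes (tapeAut_step_inr_succ hk Ak q σ j (by omega))
      (ih (by omega))

theorem tapeAut_reach_of_path {q f : Qk} {u : List α} (p : Ak.Path q f u) :
    (tapeAut k hk Ak).Reach (.inl q) (fun _ => u) (.inl f) := by
  induction p with
  | nil q => exact .refl _
  | cons q' q f σ u hq' _ ih =>
    rw [← staggeredTapes_zero σ u]
    exact MTA.Reach.step_staggeredTapes (tapeAut_step_inl hk Ak q σ)
      (tapeAut_reach_inr_of_reach hk Ak hq' ih 0 (by omega))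

/-- In state `(q, σ, j)` the letter `σ` has been read from tapes `0, …, j` but not yet from the
later ones. -/
def TapeAutRunInvariant (f : Qk) :
    Qk ⊕ Qk × α × Fin (k - 1) → (Fin k → List α) → Prop
  | .inl q, w => ∃ u, w = (fun _ => u) ∧ Nonempty (Ak.Path q f u)
  | .inr (q, σ, j), w =>
      ∃ u, w = staggeredTapes σ u (j + 1) ∧ ∃ q' ∈ Ak.step q σ, Nonempty (Ak.Path q' f u)

theorem tapeAutRunInvariant_of_reach {x y : Qk ⊕ Qk × α × Fin (k - 1)} {w : Fin k → List α}
    (h : (tapeAut k hk Ak).Reach x w y) {f : Qk} (hy : y = .inl f) :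
    TapeAutRunInvariant Ak f x w := by
  induction h with
  | refl x => subst hy; exact ⟨[], rfl, ⟨.nil f⟩⟩
  | @step x x' z τ i w hstep _ ih =>
    specialize ih hy
    rcases x with q | ⟨q, σ, j⟩
    · obtain ⟨rfl, rfl⟩ := hstep
      obtain ⟨u, rfl, q', hq', ⟨p⟩⟩ := ih
      refine ⟨τ :: u, ?_, ⟨.cons q' q f τ u hq' p⟩⟩
      rw [← staggeredTapes_zero]
      exact update_staggeredTapes τ u _
    · obtain ⟨rfl, hi, ⟨hj, rfl⟩ | ⟨hj, q', hq', rfl⟩⟩ := hstep <;>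
        obtain ⟨i, hik⟩ := i <;> obtain rfl : i = j + 1 := hi
      · obtain ⟨u, rfl, hu⟩ := ih
        exact ⟨u, update_staggeredTapes τ u ⟨j + 1, hik⟩, hu⟩
      · obtain ⟨u, rfl, ⟨p⟩⟩ := ih
        refine ⟨u, ?_, q', hq', ⟨p⟩⟩
        rw [← staggeredTapes_of_le τ u (show k ≤ j + 1 + 1 by omega)]
        exact update_staggeredTapes τ u ⟨j + 1, hik⟩

theorem tapeAut_accepts_iff {w : Fin k → List α} :
    (tapeAut k hk Ak).Accepts w ↔ ∃ u ∈ Ak.accepts, w = fun _ => u := by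
  simp only [MTA.Accepts, NFA.accepts_iff_exists_path]
  constructor
  · rintro ⟨_, ⟨q, hq, rfl⟩, _, ⟨f, hf, rfl⟩, h⟩
    obtain ⟨u, rfl, hp⟩ := tapeAutRunInvariant_of_reach hk Ak h rfl
    exact ⟨u, ⟨q, hq, f, hf, hp⟩, rfl⟩
  · rintro ⟨u, ⟨q, hq, f, hf, ⟨p⟩⟩, rfl⟩
    exact ⟨_, ⟨q, hq, rfl⟩, _, ⟨f, hf, rfl⟩, tapeAut_reach_of_path hk Ak p⟩

end tapeAut

end

/-- Given `k+1` NFA `A 0, …, A k`, there are words `w i ∈ L(A i)` for `i ∈ [k]`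
such that the tuple `(w 0, …, w (k-1))` is accepted by the `k`-tape automaton
built from `A k`, if and only if `⋂_{i=0}^{k} L(A i) ≠ ∅`. -/
theorem tapeAut_satisfaction_iff_intersection {α : Type*} (k : ℕ) (hk : 2 ≤ k)
    (Q : Fin (k + 1) → Type*) (A : ∀ i, NFA α (Q i)) :
    (∃ w : Fin k → List α,
        (∀ i : Fin k, w i ∈ (A i.castSucc).accepts) ∧
        (tapeAut k hk (A (Fin.last k))).Accepts w) ↔
      (⋂ i, ((A i).accepts : Set (List α))).Nonempty := by
  simp only [tapeAut_accepts_iff]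
  constructor
  · rintro ⟨_, hw, u, hu, rfl⟩
    exact ⟨u, Set.mem_iInter.2 fun i => Fin.lastCases hu hw i⟩
  · rintro ⟨u, hu⟩
    have hu : ∀ i, u ∈ (A i).accepts := Set.mem_iInter.1 hu
    exact ⟨fun _ => u, fun i => hu i.castSucc, u, hu (Fin.last k), rfl⟩
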